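/- For all integers n ≥ 1 and s ≥ 1, F_{2sn} − (−1)^s·F_{2s(n−1)} = F_s·L_{s(2n−1)}. -/

import Mathlib

/-!
With `d = 2s(n-1)` the identity is the case `k = s` of `F_k L_{k+d} = F_{2k+d} - (-1)^k F_d`,
valid for all `k, d`. That is proved by induction on `k`: writing `F_{k+2} = F_{k+1} + F_k`
reduces the case `k + 2` to the cases `k + 1` and `k` with `d` shifted by `1` and `2`, and the
remaining terms combine through the Fibonacci recurrence.
-/

def lucas : ℕ → ℕ
  | 0 => 2
  | 1 => 1
  | n + 2 => lucas (n + 1) + lucas n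

open Nat

theorem lucas_succ_eq_fib_add_fib (n : ℕ) : lucas (n + 1) = fib n + fib (n + 2) := by
  induction n using Nat.twoStepInduction with
  | zero => rfl
  | one => rfl
  | more n ih0 ih1 =>
    change lucas (n + 2) + lucas (n + 1) = _
    rw [ih0, ih1, fib_add_two (n := n + 2), fib_add_two (n := n)]
    ring

theorem fib_mul_lucas_add (k d : ℕ) :
    (fib k : ℤ) * lucas (k + d) = fib (2 * k + d) - (-1) ^ k * fib d := by
  induction k using Nat.twoStepInduction generalizing d with
  | zero => simp
  | one =>
    rw [add_comm 1 d, lucas_succ_eq_fib_add_fib, show 2 * 1 + d = d + 2 by ring]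
    push_cast
    ring
  | more k ih0 ih1 =>
    have h0 := ih0 (d + 2)
    have h1 := ih1 (d + 1)
    rw [show k + (d + 2) = k + 2 + d by ring, show 2 * k + (d + 2) = 2 * k + d + 2 by ring] at h0
    rw [show k + 1 + (d + 1) = k + 2 + d by ring,
      show 2 * (k + 1) + (d + 1) = 2 * k + d + 3 by ring] at h1
    rw [show 2 * (k + 2) + d = 2 * k + d + 4 by ring, fib_add_two (n := k),
      fib_add_two (n := 2 * k + d + 2)]
    rw [fib_add_two (n := d)] at h0
    push_cast at h0 h1 ⊢
    linear_combination h0 + h1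

theorem stmt19_general (n s : ℕ) (hn : 1 ≤ n) :
    (Nat.fib (2 * s * n) : ℤ) - (-1) ^ s * (Nat.fib (2 * s * (n - 1)) : ℤ) =
      (Nat.fib s : ℤ) * (lucas (s * (2 * n - 1)) : ℤ) := by
  obtain ⟨m, rfl⟩ := Nat.exists_eq_add_of_le' hn
  have hsum : s * (2 * (m + 1) - 1) = s + 2 * s * m := by
    rw [show 2 * (m + 1) - 1 = 2 * m + 1 by omega]
    ring
  rw [hsum, fib_mul_lucas_add, add_tsub_cancel_right,
    show 2 * s * (m + 1) = 2 * s + 2 * s * m by ring]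

theorem stmt19 (n s : ℕ) (hn : 1 ≤ n) (hs : 1 ≤ s) :
    (Nat.fib (2 * s * n) : ℤ) - (-1) ^ s * (Nat.fib (2 * s * (n - 1)) : ℤ) =
      (Nat.fib s : ℤ) * (lucas (s * (2 * n - 1)) : ℤ) :=
  stmt19_general n s hn
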